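/- arXiv:1305.6450 — 3 statements merged into one kernel-verified Lean document; each statement's English description precedes it below -/
import Mathlib

section
/- Let ε > 0, T > 0 and let H : [0,T] → ℝ be bounded above. Assume that for every t ∈ [0,T], H(t) ≤ e^{−t/ε} H(0) + (1 − e^{−t/ε}) · sup_{0≤s≤t} H(s). Then H(t) ≤ H(0) for all t ∈ [0,T]. -/
/-! The supremum `M` of `H` on `[0, T]` satisfies `M ≤ (1 - c) M + c H(0)`, where `c > 0` is a
uniform lower bound for the weight of `H(0)` (here `c = exp (-|T / ε|)`); hence `M ≤ H(0)`. -/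

open Set

lemma weighted_le_sub_mul_sub {a c x S M : ℝ} (hca : c ≤ a) (hc1 : c ≤ 1) (hxS : x ≤ S)
    (hSM : S ≤ M) : a * x + (1 - a) * S ≤ M - c * (M - x) :=
  calc a * x + (1 - a) * S = S - a * (S - x) := by ring
    _ ≤ S - c * (S - x) := by gcongr
    _ = (1 - c) * S + c * x := by ring
    _ ≤ (1 - c) * M + c * x := by gcongr
    _ = M - c * (M - x) := by ring

theorem le_apply_zero_of_le_weighted_sSup {H a : ℝ → ℝ} {T c : ℝ} (hc : 0 < c) (hc1 : c ≤ 1)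
    (hca : ∀ t ∈ Icc 0 T, c ≤ a t) (hbdd : BddAbove (H '' Icc 0 T))
    (hyp : ∀ t ∈ Icc 0 T, H t ≤ a t * H 0 + (1 - a t) * sSup (H '' Icc 0 t)) :
    ∀ t ∈ Icc 0 T, H t ≤ H 0 := by
  intro t ht
  have h0 : (0 : ℝ) ∈ Icc 0 T := ⟨le_rfl, ht.1.trans ht.2⟩
  set M := sSup (H '' Icc 0 T)
  have key : ∀ s ∈ Icc 0 T, H s ≤ M - c * (M - H 0) := by
    intro s hs
    have hsub : H '' Icc 0 s ⊆ H '' Icc 0 T := image_mono (Icc_subset_Icc le_rfl hs.2)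
    have hH0 : H 0 ∈ H '' Icc 0 s := mem_image_of_mem H ⟨le_rfl, hs.1⟩
    refine (hyp s hs).trans (weighted_le_sub_mul_sub (hca s hs) hc1 ?_ ?_)
    · exact le_csSup (hbdd.mono hsub) hH0
    · exact csSup_le_csSup hbdd ⟨_, hH0⟩ hsub
  have hM : M ≤ M - c * (M - H 0) := csSup_le ⟨_, mem_image_of_mem H h0⟩ (forall_mem_image.2 key)
  have hMH0 : M ≤ H 0 := by nlinarith
  exact (le_csSup hbdd (mem_image_of_mem H ht)).trans hMH0

lemma exp_neg_abs_div_le_exp_neg_div {t T : ℝ} (ε : ℝ) (ht : t ∈ Icc 0 T) :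
    Real.exp (-|T / ε|) ≤ Real.exp (-t / ε) := by
  have htT : |t / ε| ≤ |T / ε| := by
    rw [abs_div, abs_div, abs_of_nonneg ht.1, abs_of_nonneg (ht.1.trans ht.2)]
    gcongr
    exact ht.2
  gcongr
  rw [neg_div]
  linarith [le_abs_self (t / ε)]

theorem comparison_lemma_exponential_general (ε T : ℝ)
    (H : ℝ → ℝ) (hbdd : BddAbove (H '' Set.Icc (0 : ℝ) T))
    (hyp : ∀ t ∈ Set.Icc (0 : ℝ) T,
      H t ≤ Real.exp (-t / ε) * H 0 +
        (1 - Real.exp (-t / ε)) * sSup (H '' Set.Icc (0 : ℝ) t)) :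
    ∀ t ∈ Set.Icc (0 : ℝ) T, H t ≤ H 0 :=
  le_apply_zero_of_le_weighted_sSup (a := fun t => Real.exp (-t / ε)) (Real.exp_pos _)
    (Real.exp_le_one_iff.2 (neg_nonpos.2 (abs_nonneg _)))
    (fun _ ht => exp_neg_abs_div_le_exp_neg_div ε ht) hbdd hyp

theorem comparison_lemma_exponential (ε T : ℝ) (hε : 0 < ε) (hT : 0 < T)
    (H : ℝ → ℝ) (hbdd : BddAbove (H '' Set.Icc (0 : ℝ) T))
    (hyp : ∀ t ∈ Set.Icc (0 : ℝ) T,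
      H t ≤ Real.exp (-t / ε) * H 0 +
        (1 - Real.exp (-t / ε)) * sSup (H '' Set.Icc (0 : ℝ) t)) :
    ∀ t ∈ Set.Icc (0 : ℝ) T, H t ≤ H 0 :=
  comparison_lemma_exponential_general ε T H hbdd hyp
end

section
/- Let u ∈ ℝ and let F : ℝ → ℝ be measurable with 0 ≤ F(ζ) ≤ 1 for all ζ ∈ ℝ. Assume the function g(ζ) = 1_{u>ζ} − F(ζ) is integrable on ℝ and ∫_ℝ g(ζ) dζ = 0. Then for every ξ ∈ ℝ, ∫_{(−∞,ξ]} (1_{u>ζ} − F(ζ)) dζ ≥ 0. -/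
open MeasureTheory Set

/- For `ξ < u` the integrand is nonnegative on all of `Iic ξ`. For `ξ ≥ u` the total integral
vanishes, so the integral over `Iic ξ` is minus that over `Ioi ξ`, where the integrand is
nonpositive. -/
theorem setIntegral_Iic_nonneg_of_sign_change {α : Type*} [TopologicalSpace α] [LinearOrder α]
    [OrderClosedTopology α] [MeasurableSpace α] [OpensMeasurableSpace α] {μ : Measure α}
    {g : α → ℝ} {u : α} (hg : Integrable g μ) (hzero : ∫ x, g x ∂μ = 0)
    (hpos : ∀ x < u, 0 ≤ g x) (hneg : ∀ x, u ≤ x → g x ≤ 0) (ξ : α) :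
    0 ≤ ∫ x in Iic ξ, g x ∂μ := by
  rcases lt_or_ge ξ u with hξ | hξ
  · exact setIntegral_nonneg measurableSet_Iic fun x hx => hpos x (lt_of_le_of_lt hx hξ)
  · have hsplit := integral_add_compl (measurableSet_Iic (a := ξ)) hg
    rw [compl_Iic, hzero] at hsplit
    have hIoi : ∫ x in Ioi ξ, g x ∂μ ≤ 0 :=
      setIntegral_nonpos measurableSet_Ioi fun x hx => hneg x (hξ.trans (le_of_lt hx))
    linarith

theorem defect_measure_nonneg_general (u : ℝ) (F : ℝ → ℝ)
    (hF01 : ∀ ζ : ℝ, 0 ≤ F ζ ∧ F ζ ≤ 1)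
    (hint : Integrable (fun ζ : ℝ =>
      Set.indicator {z : ℝ | z < u} (1 : ℝ → ℝ) ζ - F ζ))
    (hzero : ∫ ζ : ℝ, (Set.indicator {z : ℝ | z < u} (1 : ℝ → ℝ) ζ - F ζ) = 0) :
    ∀ ξ : ℝ, 0 ≤ ∫ ζ in Set.Iic ξ,
      (Set.indicator {z : ℝ | z < u} (1 : ℝ → ℝ) ζ - F ζ) := by
  refine setIntegral_Iic_nonneg_of_sign_change hint hzero (u := u) (fun ζ hζ => ?_) fun ζ hζ => ?_
  · rw [indicator_of_mem (show ζ ∈ {z : ℝ | z < u} from hζ), Pi.one_apply]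
    linarith [(hF01 ζ).2]
  · rw [indicator_of_notMem (show ζ ∉ {z : ℝ | z < u} from not_lt.mpr hζ)]
    linarith [(hF01 ζ).1]

theorem defect_measure_nonneg (u : ℝ) (F : ℝ → ℝ) (hFmeas : Measurable F)
    (hF01 : ∀ ζ : ℝ, 0 ≤ F ζ ∧ F ζ ≤ 1)
    (hint : Integrable (fun ζ : ℝ =>
      Set.indicator {z : ℝ | z < u} (1 : ℝ → ℝ) ζ - F ζ))
    (hzero : ∫ ζ : ℝ, (Set.indicator {z : ℝ | z < u} (1 : ℝ → ℝ) ζ - F ζ) = 0) :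
    ∀ ξ : ℝ, 0 ≤ ∫ ζ in Set.Iic ξ,
      (Set.indicator {z : ℝ | z < u} (1 : ℝ → ℝ) ζ - F ζ) :=
  defect_measure_nonneg_general u F hF01 hint hzero
end

section
/- Fix N ≥ 1. Let h : ℝ^N × ℝ → ℝ be smooth, nonnegative with ∫_{ℝ^N×ℝ} h = 1 and with support contained in the closed unit ball, and for τ > 0 set h_τ(z) = τ^{−(N+1)} h(z/τ). Let a : ℝ → ℝ^N be Lipschitz with Lipschitz constant L, let p, q ∈ [1, ∞] be conjugate exponents (1/p + 1/q = 1), let φ : ℝ^N × ℝ → ℝ be smooth and compactly supported, and let K_φ denote the closed 1-neighborhood of the support of φ. Then for every measurable X : ℝ^N × ℝ → ℝ with X ∈ L^p(K_φ) and every τ ∈ (0,1], the commutator D_τ(x,ξ) = ∫_{ℝ^N} ∫_ℝ X(y,ζ) (a(ξ) − a(ζ)) · (∇_x h_τ)(x−y, ξ−ζ) dζ dy satisfies |∫_{ℝ^N} ∫_ℝ D_τ(x,ξ) φ(x,ξ) dξ dx| ≤ L · ‖∇h‖_{L¹} · ‖X‖_{L^p(K_φ)} · ‖φ‖_{L^q(ℝ^N×ℝ)}.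 -/
set_option maxHeartbeats 1000000

open MeasureTheory Filter
open scoped ENNReal NNReal


lemma aux_fderiv {E : Type*} [NormedAddCommGroup E] [NormedSpace ℝ E]
    (h : E → ℝ) (hd : Differentiable ℝ h) (c t : ℝ) (z u : E) :
    fderiv ℝ (fun z => c * h (t • z)) z u = c * (t * fderiv ℝ h (t • z) u) := by
  have h1 : HasFDerivAt (fun z : E => t • z) (t • ContinuousLinearMap.id ℝ E) z :=
    (hasFDerivAt_id z).const_smul t
  have h2 : HasFDerivAt (fun z : E => c * h (t • z))
      (c • ((fderiv ℝ h (t • z)).comp (t • ContinuousLinearMap.id ℝ E))) z :=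
    (((hd (t • z)).hasFDerivAt.comp z h1)).const_mul c
  rw [h2.fderiv]
  simp [smul_eq_mul, mul_comm]

lemma pointwise_bound (N : ℕ) (h : (Fin N → ℝ) × ℝ → ℝ) (hd : Differentiable ℝ h)
    (hsupp : tsupport h ⊆ Metric.closedBall 0 1)
    (a : ℝ → EuclideanSpace ℝ (Fin N)) (L : NNReal) (hL : LipschitzWith L a)
    (φ X : (Fin N → ℝ) × ℝ → ℝ)
    (τ : ℝ) (hτ : 0 < τ) (hτ1 : τ ≤ 1) (x y : Fin N → ℝ) (ξ ζ : ℝ) :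
    |(X (y, ζ) * ∑ i : Fin N, (a ξ i - a ζ i) *
        fderiv ℝ (fun z : (Fin N → ℝ) × ℝ => (τ ^ (N + 1))⁻¹ * h (τ⁻¹ • z)) (x - y, ξ - ζ)
          (Pi.single i 1, 0)) * φ (x, ξ)|
      ≤ (L : ℝ) * |Set.indicator (Metric.cthickening 1 (tsupport φ)) X (y, ζ)|
          * ((τ ^ (N + 1))⁻¹ * ‖fderiv ℝ h (τ⁻¹ • ((x, ξ) - (y, ζ)))‖) * |φ (x, ξ)| := by
  have hzsub : ((x,ξ) : (Fin N → ℝ) × ℝ) - (y,ζ) = (x - y, ξ - ζ) := rfl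
  set z : (Fin N → ℝ) × ℝ := (x - y, ξ - ζ) with hz
  set w : (Fin N → ℝ) × ℝ := τ⁻¹ • z with hw
  set v : Fin N → ℝ := fun i => a ξ i - a ζ i with hv
  set c : ℝ := (τ ^ (N + 1))⁻¹ with hc
  have hcnn : 0 ≤ c := by positivity
  have hτ' : (0:ℝ) < τ⁻¹ := by positivity
  rw [hzsub]
  -- sum computation
  have hvsum : ((v, (0:ℝ)) : (Fin N → ℝ) × ℝ)
      = ∑ i : Fin N, (a ξ i - a ζ i) • (((Pi.single i 1 : Fin N → ℝ), (0:ℝ))) := by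
    refine Prod.ext ?_ ?_
    · rw [Prod.fst_sum]
      funext j
      rw [Finset.sum_apply]
      simp [Pi.single_apply, Finset.sum_ite_eq]
      rfl
    · rw [Prod.snd_sum]
      simp
  have hsum : ∑ i : Fin N, (a ξ i - a ζ i) *
        fderiv ℝ (fun z : (Fin N → ℝ) × ℝ => c * h (τ⁻¹ • z)) z (Pi.single i 1, 0)
      = c * (τ⁻¹ * fderiv ℝ h w (v, (0:ℝ))) := by
    have : ∀ i : Fin N,
        fderiv ℝ (fun z : (Fin N → ℝ) × ℝ => c * h (τ⁻¹ • z)) z (Pi.single i 1, 0)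
        = c * (τ⁻¹ * fderiv ℝ h w (Pi.single i 1, 0)) := fun i => aux_fderiv h hd c τ⁻¹ z _
    simp only [this]
    rw [hvsum, map_sum]
    simp only [ContinuousLinearMap.map_smul, smul_eq_mul, Finset.mul_sum]
    exact Finset.sum_congr rfl fun i _ => by ring
  rw [hsum]
  rcases eq_or_ne (fderiv ℝ h w) 0 with h0 | h0
  · rw [h0]
    simp only [ContinuousLinearMap.zero_apply, mul_zero, zero_mul, abs_zero]
    positivity
  rcases eq_or_ne (φ (x,ξ)) 0 with hp | hp
  · simp [hp]
  -- support facts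
  have hw1 : ‖w‖ ≤ 1 := by
    have : w ∈ tsupport h := support_fderiv_subset ℝ (by exact h0)
    simpa [Metric.mem_closedBall, dist_zero_right] using hsupp this
  have hzn : ‖z‖ ≤ τ := by
    have : ‖w‖ = τ⁻¹ * ‖z‖ := by
      rw [hw, norm_smul, Real.norm_eq_abs, abs_of_pos hτ']
    rw [this] at hw1
    rwa [inv_mul_le_iff₀ hτ, mul_one] at hw1
  have hξζ : |ξ - ζ| ≤ τ := by
    have := norm_snd_le z
    simp only [hz, Real.norm_eq_abs] at this
    linarith
  have hvb : ‖v‖ ≤ (L : ℝ) * τ := by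
    refine (pi_norm_le_iff_of_nonneg (by positivity)).2 fun i => ?_
    have h1 : v i = (a ξ - a ζ) i := rfl
    have h2 : |(a ξ - a ζ) i| ≤ ‖a ξ - a ζ‖ := by
      rw [EuclideanSpace.norm_eq]
      rw [← Real.sqrt_sq_eq_abs]
      apply Real.sqrt_le_sqrt
      refine Finset.single_le_sum (f := fun j => ‖(a ξ - a ζ) j‖ ^ 2) ?_ (Finset.mem_univ i)
        |>.trans_eq' ?_
      · intro j _; positivity
      · rw [Real.norm_eq_abs, sq_abs]
    have h3 : ‖a ξ - a ζ‖ ≤ (L : ℝ) * |ξ - ζ| := by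
      have := hL.dist_le_mul ξ ζ
      rwa [dist_eq_norm, dist_eq_norm, Real.norm_eq_abs] at this
    rw [Real.norm_eq_abs, h1]
    calc |(a ξ - a ζ) i| ≤ (L:ℝ) * |ξ - ζ| := h2.trans h3
      _ ≤ (L:ℝ) * τ := by gcongr
  have hD : |fderiv ℝ h w (v, 0)| ≤ ‖fderiv ℝ h w‖ * ((L:ℝ) * τ) := by
    refine ((fderiv ℝ h w).le_opNorm _).trans ?_
    gcongr
    rw [Prod.norm_def]
    simpa using hvb
  -- indicator
  have hmem : ((y,ζ) : (Fin N → ℝ) × ℝ) ∈ Metric.cthickening 1 (tsupport φ) := by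
    refine Metric.mem_cthickening_of_dist_le _ ((x,ξ) : (Fin N → ℝ) × ℝ) _ _
      (subset_tsupport φ hp) ?_
    rw [dist_eq_norm]
    have : ((y,ζ) : (Fin N → ℝ) × ℝ) - (x,ξ) = -z := by rw [← hzsub]; abel
    rw [this, norm_neg]
    linarith
  rw [Set.indicator_of_mem hmem]
  rw [abs_mul, abs_mul, abs_mul, abs_mul]
  rw [abs_of_nonneg hcnn, abs_of_pos hτ']
  have key : c * (τ⁻¹ * |fderiv ℝ h w (v, 0)|)
      ≤ (L:ℝ) * (c * ‖fderiv ℝ h w‖) := by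
    have h4 : τ⁻¹ * |fderiv ℝ h w (v, 0)| ≤ (L:ℝ) * ‖fderiv ℝ h w‖ := by
      rw [inv_mul_le_iff₀ hτ]
      calc |fderiv ℝ h w (v, 0)| ≤ ‖fderiv ℝ h w‖ * ((L:ℝ) * τ) := hD
        _ = τ * ((L:ℝ) * ‖fderiv ℝ h w‖) := by ring
    calc c * (τ⁻¹ * |fderiv ℝ h w (v, 0)|) ≤ c * ((L:ℝ) * ‖fderiv ℝ h w‖) := by gcongr
      _ = (L:ℝ) * (c * ‖fderiv ℝ h w‖) := by ring
  calc |X (y,ζ)| * (c * (τ⁻¹ * |fderiv ℝ h w (v, 0)|)) * |φ (x,ξ)|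
      ≤ |X (y,ζ)| * ((L:ℝ) * (c * ‖fderiv ℝ h w‖)) * |φ (x,ξ)| := by gcongr
    _ = (L:ℝ) * |X (y,ζ)| * (c * ‖fderiv ℝ h w‖) * |φ (x,ξ)| := by ring


lemma core_swap {E : Type*} [NormedAddCommGroup E] [NormedSpace ℝ E] [MeasurableSpace E]
    [BorelSpace E] [FiniteDimensional ℝ E]
    (μ : Measure E) [μ.IsAddHaarMeasure] (A B C : E → ℝ≥0∞) (L : ℝ≥0∞) (hL : L ≠ ⊤)
    (hB : ∀ z, B z ≠ ⊤)
    (hAm : Measurable A) (hBm : Measurable B) (hCm : Measurable C) :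
    (∫⁻ z, ∫⁻ w, L * A w * B (z - w) * C z ∂μ ∂μ)
      = ∫⁻ z, B z * (L * ∫⁻ w, A w * C (z + w) ∂μ) ∂μ := by
  have hm1 : Measurable (Function.uncurry fun z w : E => L * A w * B (z - w) * C z) :=
    (((measurable_const.mul (hAm.comp measurable_snd)).mul
      (hBm.comp (measurable_fst.sub measurable_snd))).mul (hCm.comp measurable_fst))
  have hm2 : Measurable (Function.uncurry fun w z : E => L * A w * B z * C (z + w)) :=
    (((measurable_const.mul (hAm.comp measurable_fst)).mul
      (hBm.comp measurable_snd)).mul (hCm.comp (measurable_snd.add measurable_fst)))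
  calc (∫⁻ z, ∫⁻ w, L * A w * B (z - w) * C z ∂μ ∂μ)
      = ∫⁻ w, ∫⁻ z, L * A w * B (z - w) * C z ∂μ ∂μ :=
        lintegral_lintegral_swap hm1.aemeasurable
    _ = ∫⁻ w, ∫⁻ z, L * A w * B z * C (z + w) ∂μ ∂μ := by
        refine lintegral_congr fun w => ?_
        have hmp := measurePreserving_add_right μ w
        have hg : Measurable fun z : E => L * A w * B (z - w) * C z :=
          (measurable_const.mul (hBm.comp (measurable_id.sub measurable_const))).mul hCm
        calc (∫⁻ z, L * A w * B (z - w) * C z ∂μ)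
            = ∫⁻ z, L * A w * B (z + w - w) * C (z + w) ∂μ :=
              (hmp.lintegral_comp hg).symm
          _ = ∫⁻ z, L * A w * B z * C (z + w) ∂μ := by
              simp only [add_sub_cancel_right]
    _ = ∫⁻ z, ∫⁻ w, L * A w * B z * C (z + w) ∂μ ∂μ :=
        lintegral_lintegral_swap hm2.aemeasurable
    _ = ∫⁻ z, B z * (L * ∫⁻ w, A w * C (z + w) ∂μ) ∂μ := by
        refine lintegral_congr fun z => ?_
        have hrw : ∀ w : E, L * A w * B z * C (z + w)
            = (B z * L) * (A w * C (z + w)) := fun w => by ring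
        rw [lintegral_congr hrw, lintegral_const_mul' _ _
          (ENNReal.mul_ne_top (hB z) hL), mul_assoc]

lemma core_assembly {E : Type*} [NormedAddCommGroup E] [NormedSpace ℝ E] [MeasurableSpace E]
    [BorelSpace E] [FiniteDimensional ℝ E]
    (μ : Measure E) [μ.IsAddHaarMeasure] [SFinite μ]
    (F Gf φ : E → ℝ)
    (hFm : Measurable F) (hGm : Measurable Gf) (hφc : Continuous φ)
    (L : ℝ≥0) (p q : ℝ≥0∞) (hq1 : (1 : ℝ≥0∞) / 1 = 1 / p + 1 / q)
    (hφq : eLpNorm φ q μ ≠ ⊤) (hFp : eLpNorm F p μ ≠ ⊤) :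
    (∫⁻ z, ∫⁻ w, (L : ℝ≥0∞) * ENNReal.ofReal |F w| * ENNReal.ofReal (Gf (z - w))
        * ENNReal.ofReal |φ z| ∂μ ∂μ)
      ≤ (L : ℝ≥0∞) * (∫⁻ z, ENNReal.ofReal (Gf z) ∂μ) * eLpNorm F p μ * eLpNorm φ q μ := by
  have hAm : Measurable fun w => ENNReal.ofReal |F w| := hFm.abs.ennreal_ofReal
  have hBm : Measurable fun z => ENNReal.ofReal (Gf z) := hGm.ennreal_ofReal
  have hCm : Measurable fun z => ENNReal.ofReal |φ z| := hφc.measurable.abs.ennreal_ofReal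
  have holder : ∀ z : E, (∫⁻ w, ENNReal.ofReal |F w| * ENNReal.ofReal |φ (z + w)| ∂μ)
      ≤ eLpNorm F p μ * eLpNorm φ q μ := by
    intro z
    have htr : MeasurePreserving (fun w : E => z + w) μ μ := measurePreserving_add_left μ z
    have hφtr : AEStronglyMeasurable (fun w : E => φ (z + w)) μ :=
      (hφc.comp (continuous_const.add continuous_id)).aestronglyMeasurable
    have heq : (∫⁻ w, ENNReal.ofReal |F w| * ENNReal.ofReal |φ (z + w)| ∂μ)
        = eLpNorm (fun w => F w * φ (z + w)) 1 μ := by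
      rw [eLpNorm_one_eq_lintegral_enorm]
      refine lintegral_congr fun w => ?_
      rw [← Real.enorm_eq_ofReal_abs, ← Real.enorm_eq_ofReal_abs, ← enorm_mul]
    rw [heq]
    haveI : ENNReal.HolderTriple p q 1 := ⟨by simpa [one_div] using hq1.symm⟩
    have h2 := eLpNorm_le_eLpNorm_mul_eLpNorm'_of_norm (μ := μ) (p := p) (q := q) (r := 1)
      hFm.aestronglyMeasurable hφtr (fun r s => r * s) 1
      (Filter.Eventually.of_forall fun w => by simp [norm_mul])
    rw [ENNReal.coe_one, one_mul] at h2
    refine h2.trans (le_of_eq ?_)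
    congr 1
    exact eLpNorm_comp_measurePreserving hφc.aestronglyMeasurable htr
  rw [core_swap μ _ _ _ _ ENNReal.coe_ne_top (fun z => ENNReal.ofReal_ne_top) hAm hBm hCm]
  calc (∫⁻ z, ENNReal.ofReal (Gf z)
          * ((L:ℝ≥0∞) * ∫⁻ w, ENNReal.ofReal |F w| * ENNReal.ofReal |φ (z + w)| ∂μ) ∂μ)
      ≤ ∫⁻ z, ENNReal.ofReal (Gf z)
          * ((L:ℝ≥0∞) * (eLpNorm F p μ * eLpNorm φ q μ)) ∂μ := by
        refine lintegral_mono fun z => ?_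
        gcongr
        exact holder z
    _ = (∫⁻ z, ENNReal.ofReal (Gf z) ∂μ) * ((L:ℝ≥0∞) * (eLpNorm F p μ * eLpNorm φ q μ)) :=
        lintegral_mul_const' _ _
          (ENNReal.mul_ne_top ENNReal.coe_ne_top (ENNReal.mul_ne_top hFp hφq))
    _ = (L : ℝ≥0∞) * (∫⁻ z, ENNReal.ofReal (Gf z) ∂μ) * eLpNorm F p μ * eLpNorm φ q μ := by
        ring

theorem diperna_lions_commutator_bound (N : ℕ) (hN : 1 ≤ N)
    (h : (Fin N → ℝ) × ℝ → ℝ) (hsmooth : ContDiff ℝ (⊤ : ℕ∞) h) (hpos : ∀ z, 0 ≤ h z)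
    (hint : ∫ z : (Fin N → ℝ) × ℝ, h z = 1)
    (hsupp : tsupport h ⊆ Metric.closedBall 0 1)
    (a : ℝ → EuclideanSpace ℝ (Fin N)) (L : NNReal) (hL : LipschitzWith L a)
    (p q : ENNReal) (hp : 1 ≤ p) (hq : 1 ≤ q) (hpq : p⁻¹ + q⁻¹ = 1)
    (φ : (Fin N → ℝ) × ℝ → ℝ) (hφ : ContDiff ℝ (⊤ : ℕ∞) φ) (hφsupp : HasCompactSupport φ)
    (X : (Fin N → ℝ) × ℝ → ℝ) (hXmeas : Measurable X)
    (hX : MemLp X p (volume.restrict (Metric.cthickening 1 (tsupport φ))))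
    (τ : ℝ) (hτ : 0 < τ) (hτ1 : τ ≤ 1) :
    ENNReal.ofReal
      |∫ x : Fin N → ℝ, ∫ ξ : ℝ,
        (∫ y : Fin N → ℝ, ∫ ζ : ℝ,
          X (y, ζ) * ∑ i : Fin N, (a ξ i - a ζ i) *
            fderiv ℝ (fun z : (Fin N → ℝ) × ℝ => (τ ^ (N + 1))⁻¹ * h (τ⁻¹ • z))
              (x - y, ξ - ζ) (Pi.single i 1, 0)) *
        φ (x, ξ)| ≤
      (L : ENNReal) * eLpNorm (fun z => ‖fderiv ℝ h z‖) 1 volume *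
        eLpNorm X p (volume.restrict (Metric.cthickening 1 (tsupport φ))) *
        eLpNorm φ q volume := by
  haveI hHaar : (volume : Measure ((Fin N → ℝ) × ℝ)).IsAddHaarMeasure := by
    rw [MeasureTheory.Measure.volume_eq_prod]; infer_instance
  set K : Set ((Fin N → ℝ) × ℝ) := Metric.cthickening 1 (tsupport φ) with hK
  have hKmeas : MeasurableSet K := Metric.isClosed_cthickening.measurableSet
  set F : (Fin N → ℝ) × ℝ → ℝ := K.indicator X with hF
  set G : (Fin N → ℝ) × ℝ → ℝ := fun z => (τ ^ (N + 1))⁻¹ * ‖fderiv ℝ h (τ⁻¹ • z)‖ with hG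
  have hdh : Differentiable ℝ h := hsmooth.differentiable (by simp)
  have hφcont : Continuous φ := hφ.continuous
  have hFmeas : Measurable F := hXmeas.indicator hKmeas
  have hdhcont : Continuous (fderiv ℝ h) := (hsmooth.fderiv_right (m := 0) (by simp)).continuous
  have hGcont : Continuous G :=
    continuous_const.mul ((hdhcont.comp (continuous_const_smul τ⁻¹)).norm)
  have hGnn : ∀ z, 0 ≤ G z := fun z => by positivity
  set Ψ : (Fin N → ℝ) × ℝ → (Fin N → ℝ) × ℝ → ℝ≥0∞ :=
    fun z w => (L : ℝ≥0∞) * ENNReal.ofReal |F w| * ENNReal.ofReal (G (z - w))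
      * ENNReal.ofReal |φ z| with hΨ
  have hAmeas : Measurable fun w : (Fin N → ℝ) × ℝ => ENNReal.ofReal |F w| :=
    hFmeas.abs.ennreal_ofReal
  have hBmeas : Measurable fun z : (Fin N → ℝ) × ℝ => ENNReal.ofReal (G z) :=
    (hGcont.measurable).ennreal_ofReal
  have hCmeas : Measurable fun z : (Fin N → ℝ) × ℝ => ENNReal.ofReal |φ z| :=
    (hφcont.measurable).abs.ennreal_ofReal
  have hΨmeas : Measurable (Function.uncurry Ψ) := by
    exact ((measurable_const.mul (hAmeas.comp measurable_snd)).mul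
      (hBmeas.comp (measurable_fst.sub measurable_snd))).mul (hCmeas.comp measurable_fst)
  -- Step 1: bound the integral by the iterated lintegral of pointwise bounds
  have key : ∀ x ξ y ζ,
      (‖X (y, ζ) * ∑ i : Fin N, (a ξ i - a ζ i) *
          fderiv ℝ (fun z : (Fin N → ℝ) × ℝ => (τ ^ (N + 1))⁻¹ * h (τ⁻¹ • z)) (x - y, ξ - ζ)
            (Pi.single i 1, 0)‖₊ : ℝ≥0∞) * ‖φ (x, ξ)‖₊ ≤ Ψ (x, ξ) (y, ζ) := by
    intro x ξ y ζ
    have hb := pointwise_bound N h hdh hsupp a L hL φ X τ hτ hτ1 x y ξ ζ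
    calc (‖X (y, ζ) * ∑ i : Fin N, (a ξ i - a ζ i) *
          fderiv ℝ (fun z : (Fin N → ℝ) × ℝ => (τ ^ (N + 1))⁻¹ * h (τ⁻¹ • z)) (x - y, ξ - ζ)
            (Pi.single i 1, 0)‖₊ : ℝ≥0∞) * ‖φ (x, ξ)‖₊
        = ENNReal.ofReal |(X (y, ζ) * ∑ i : Fin N, (a ξ i - a ζ i) *
          fderiv ℝ (fun z : (Fin N → ℝ) × ℝ => (τ ^ (N + 1))⁻¹ * h (τ⁻¹ • z)) (x - y, ξ - ζ)
            (Pi.single i 1, 0)) * φ (x, ξ)| := by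
          rw [abs_mul, ENNReal.ofReal_mul (abs_nonneg _), ← enorm_eq_nnnorm, ← enorm_eq_nnnorm,
            Real.enorm_eq_ofReal_abs,
            Real.enorm_eq_ofReal_abs]
      _ ≤ ENNReal.ofReal ((L : ℝ) * |F (y, ζ)| * G ((x, ξ) - (y, ζ)) * |φ (x, ξ)|) :=
          ENNReal.ofReal_le_ofReal hb
      _ = Ψ (x, ξ) (y, ζ) := by
          rw [ENNReal.ofReal_mul (by positivity), ENNReal.ofReal_mul (by positivity),
            ENNReal.ofReal_mul (by positivity)]
          simp [hΨ, ENNReal.ofReal_coe_nnreal]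
  have step2 : ∀ x ξ,
      (‖(∫ y : Fin N → ℝ, ∫ ζ : ℝ,
          X (y, ζ) * ∑ i : Fin N, (a ξ i - a ζ i) *
            fderiv ℝ (fun z : (Fin N → ℝ) × ℝ => (τ ^ (N + 1))⁻¹ * h (τ⁻¹ • z))
              (x - y, ξ - ζ) (Pi.single i 1, 0)) * φ (x, ξ)‖₊ : ℝ≥0∞)
        ≤ ∫⁻ y : Fin N → ℝ, ∫⁻ ζ : ℝ, Ψ (x, ξ) (y, ζ) := by
    intro x ξ
    calc (‖(∫ y : Fin N → ℝ, ∫ ζ : ℝ,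
          X (y, ζ) * ∑ i : Fin N, (a ξ i - a ζ i) *
            fderiv ℝ (fun z : (Fin N → ℝ) × ℝ => (τ ^ (N + 1))⁻¹ * h (τ⁻¹ • z))
              (x - y, ξ - ζ) (Pi.single i 1, 0)) * φ (x, ξ)‖₊ : ℝ≥0∞)
        = (‖∫ y : Fin N → ℝ, ∫ ζ : ℝ,
          X (y, ζ) * ∑ i : Fin N, (a ξ i - a ζ i) *
            fderiv ℝ (fun z : (Fin N → ℝ) × ℝ => (τ ^ (N + 1))⁻¹ * h (τ⁻¹ • z))
              (x - y, ξ - ζ) (Pi.single i 1, 0)‖₊ : ℝ≥0∞) * ‖φ (x, ξ)‖₊ := by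
          rw [nnnorm_mul, ENNReal.coe_mul]
      _ ≤ (∫⁻ y : Fin N → ℝ, ∫⁻ ζ : ℝ,
            (‖X (y, ζ) * ∑ i : Fin N, (a ξ i - a ζ i) *
            fderiv ℝ (fun z : (Fin N → ℝ) × ℝ => (τ ^ (N + 1))⁻¹ * h (τ⁻¹ • z))
              (x - y, ξ - ζ) (Pi.single i 1, 0)‖₊ : ℝ≥0∞)) * ‖φ (x, ξ)‖₊ := by
          gcongr
          refine (enorm_integral_le_lintegral_enorm _).trans ?_
          exact lintegral_mono fun y => enorm_integral_le_lintegral_enorm _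
      _ = ∫⁻ y : Fin N → ℝ, ∫⁻ ζ : ℝ,
            (‖X (y, ζ) * ∑ i : Fin N, (a ξ i - a ζ i) *
            fderiv ℝ (fun z : (Fin N → ℝ) × ℝ => (τ ^ (N + 1))⁻¹ * h (τ⁻¹ • z))
              (x - y, ξ - ζ) (Pi.single i 1, 0)‖₊ : ℝ≥0∞) * ‖φ (x, ξ)‖₊ := by
          rw [← lintegral_mul_const' _ _ ENNReal.coe_ne_top]
          exact lintegral_congr fun y => (lintegral_mul_const' _ _ ENNReal.coe_ne_top).symm
      _ ≤ ∫⁻ y : Fin N → ℝ, ∫⁻ ζ : ℝ, Ψ (x, ξ) (y, ζ) :=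
          lintegral_mono fun y => lintegral_mono fun ζ => key x ξ y ζ
  have step1 : ENNReal.ofReal
      |∫ x : Fin N → ℝ, ∫ ξ : ℝ,
        (∫ y : Fin N → ℝ, ∫ ζ : ℝ,
          X (y, ζ) * ∑ i : Fin N, (a ξ i - a ζ i) *
            fderiv ℝ (fun z : (Fin N → ℝ) × ℝ => (τ ^ (N + 1))⁻¹ * h (τ⁻¹ • z))
              (x - y, ξ - ζ) (Pi.single i 1, 0)) *
        φ (x, ξ)| ≤ ∫⁻ x : Fin N → ℝ, ∫⁻ ξ : ℝ, ∫⁻ y : Fin N → ℝ, ∫⁻ ζ : ℝ,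
          Ψ (x, ξ) (y, ζ) := by
    rw [← Real.enorm_eq_ofReal_abs]
    refine (enorm_integral_le_lintegral_enorm _).trans ?_
    refine lintegral_mono fun x => ?_
    refine (enorm_integral_le_lintegral_enorm _).trans ?_
    exact lintegral_mono fun ξ => step2 x ξ
  -- convert to product integrals
  have eqprod : (∫⁻ x : Fin N → ℝ, ∫⁻ ξ : ℝ, ∫⁻ y : Fin N → ℝ, ∫⁻ ζ : ℝ, Ψ (x, ξ) (y, ζ))
      = ∫⁻ z : (Fin N → ℝ) × ℝ, ∫⁻ w : (Fin N → ℝ) × ℝ, Ψ z w := by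
    have hinner : ∀ z, (∫⁻ y : Fin N → ℝ, ∫⁻ ζ : ℝ, Ψ z (y, ζ))
        = ∫⁻ w : (Fin N → ℝ) × ℝ, Ψ z w := fun z =>
      (lintegral_prod (fun w => Ψ z w)
        ((hΨmeas.comp measurable_prodMk_left).aemeasurable)).symm
    calc (∫⁻ x : Fin N → ℝ, ∫⁻ ξ : ℝ, ∫⁻ y : Fin N → ℝ, ∫⁻ ζ : ℝ, Ψ (x, ξ) (y, ζ))
        = ∫⁻ x : Fin N → ℝ, ∫⁻ ξ : ℝ, ∫⁻ w : (Fin N → ℝ) × ℝ, Ψ (x, ξ) w :=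
          lintegral_congr fun x => lintegral_congr fun ξ => hinner (x, ξ)
      _ = ∫⁻ z : (Fin N → ℝ) × ℝ, ∫⁻ w : (Fin N → ℝ) × ℝ, Ψ z w :=
          (lintegral_prod _ hΨmeas.lintegral_prod_right.aemeasurable).symm
  have hq1 : (1 : ℝ≥0∞) / 1 = 1 / p + 1 / q := by
    simp only [one_div, inv_one]; exact hpq.symm
  have hφmem : MemLp φ q volume := hφcont.memLp_of_hasCompactSupport hφsupp
  have hFp : eLpNorm F p (volume : Measure ((Fin N → ℝ) × ℝ)) ≠ ⊤ := by
    rw [hF, eLpNorm_indicator_eq_eLpNorm_restrict hKmeas]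
    exact hX.2.ne
  have hcore := core_assembly (volume : Measure ((Fin N → ℝ) × ℝ)) F G φ hFmeas
    hGcont.measurable hφcont L p q hq1 hφmem.2.ne hFp
  -- scaling identity
  have hrank : Module.finrank ℝ ((Fin N → ℝ) × ℝ) = N + 1 := by simp
  have hBint : (∫⁻ z : (Fin N → ℝ) × ℝ, ENNReal.ofReal (G z))
      = eLpNorm (fun z : (Fin N → ℝ) × ℝ => ‖fderiv ℝ h z‖) 1 volume := by
    have hgmeas : Measurable fun u : (Fin N → ℝ) × ℝ => (‖fderiv ℝ h u‖₊ : ℝ≥0∞) :=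
      hdhcont.measurable.enorm
    calc (∫⁻ z : (Fin N → ℝ) × ℝ, ENNReal.ofReal (G z))
        = ∫⁻ z : (Fin N → ℝ) × ℝ,
            ENNReal.ofReal ((τ ^ (N + 1))⁻¹) * (‖fderiv ℝ h (τ⁻¹ • z)‖₊ : ℝ≥0∞) := by
          refine lintegral_congr fun z => ?_
          rw [hG]
          rw [ENNReal.ofReal_mul (by positivity), ofReal_norm_eq_enorm, enorm_eq_nnnorm]
      _ = ENNReal.ofReal ((τ ^ (N + 1))⁻¹)
            * ∫⁻ z : (Fin N → ℝ) × ℝ, (‖fderiv ℝ h (τ⁻¹ • z)‖₊ : ℝ≥0∞) :=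
          lintegral_const_mul' _ _ ENNReal.ofReal_ne_top
      _ = ENNReal.ofReal ((τ ^ (N + 1))⁻¹) * (ENNReal.ofReal |((τ⁻¹) ^ (N + 1))⁻¹|
            * ∫⁻ u : (Fin N → ℝ) × ℝ, (‖fderiv ℝ h u‖₊ : ℝ≥0∞)) := by
          congr 1
          have hmap : ∫⁻ z : (Fin N → ℝ) × ℝ, (‖fderiv ℝ h (τ⁻¹ • z)‖₊ : ℝ≥0∞)
              = ∫⁻ u, (‖fderiv ℝ h u‖₊ : ℝ≥0∞)
                  ∂(Measure.map (fun z : (Fin N → ℝ) × ℝ => τ⁻¹ • z) volume) :=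
            (lintegral_map hgmeas (measurable_const_smul τ⁻¹)).symm
          rw [hmap, Measure.map_addHaar_smul volume (inv_ne_zero hτ.ne'),
            lintegral_smul_measure, smul_eq_mul, hrank]
      _ = ∫⁻ u : (Fin N → ℝ) × ℝ, (‖fderiv ℝ h u‖₊ : ℝ≥0∞) := by
          rw [← mul_assoc, ← ENNReal.ofReal_mul (by positivity)]
          have hone : (τ ^ (N + 1))⁻¹ * |((τ⁻¹) ^ (N + 1))⁻¹| = 1 := by
            rw [abs_of_pos (by positivity)]
            field_simp
            rw [one_div, inv_pow, mul_inv_cancel₀ (by positivity)]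
          rw [hone, ENNReal.ofReal_one, one_mul]
      _ = eLpNorm (fun z : (Fin N → ℝ) × ℝ => ‖fderiv ℝ h z‖) 1 volume := by
          rw [eLpNorm_one_eq_lintegral_enorm]
          exact lintegral_congr fun u => by rw [enorm_norm, enorm_eq_nnnorm]
  refine step1.trans (eqprod.trans_le ?_)
  refine hcore.trans (le_of_eq ?_)
  rw [hBint, hF, eLpNorm_indicator_eq_eLpNorm_restrict hKmeas]
end
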